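/- Let V be a real vector space of dimension 2n, let 0 ≤ k ≤ n, let B and ω be real 2-forms in ∧²V*, and let θ₁, …, θ_k ∈ V* ⊗ ℂ be complex 1-forms with Ω = θ₁ ∧ ⋯ ∧ θ_k. Then the Mukai pairing of φ = exp(B + iω) ∧ Ω with its complex conjugate, (φ, conj(φ)) = (exp(B+iω) ∧ Ω, exp(B−iω) ∧ conj(Ω)), is nonzero if and only if ω^{n−k} ∧ Ω ∧ conj(Ω) ≠ 0; indeed the pairing equals a fixed nonzero complex constant depending only on n and k times ω^{n−k} ∧ Ω ∧ conj(Ω). -/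

import Mathlib

set_option synthInstance.maxHeartbeats 1000000
set_option maxHeartbeats 1000000

open Module
open scoped TensorProduct

/-- Projection onto the degree-`j` component of the exterior algebra. -/
noncomputable def extProj (V : Type*) [AddCommGroup V] [Module ℝ V] (j : ℕ) :
    ExteriorAlgebra ℝ (Module.Dual ℝ V) →ₗ[ℝ] ExteriorAlgebra ℝ (Module.Dual ℝ V) :=
  (Submodule.subtype _) ∘ₗ
    (DirectSum.component ℝ ℕ (fun i => ⋀[ℝ]^i (Module.Dual ℝ V)) j) ∘ₗ
      (DirectSum.decomposeLinearEquiv (fun i : ℕ => ⋀[ℝ]^i (Module.Dual ℝ V))).toLinearMap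

/-- The reversal antiautomorphism `α`, acting on the degree-`k` component as
`(−1)^{k(k−1)/2}`. -/
noncomputable def alphaMap (V : Type*) [AddCommGroup V] [Module ℝ V] :
    ExteriorAlgebra ℝ (Module.Dual ℝ V) →ₗ[ℝ] ExteriorAlgebra ℝ (Module.Dual ℝ V) :=
  (DirectSum.toModule ℝ ℕ (ExteriorAlgebra ℝ (Module.Dual ℝ V))
      fun k => ((-1 : ℝ) ^ (k * (k - 1) / 2)) • (Submodule.subtype _)) ∘ₗ
    (DirectSum.decomposeLinearEquiv (fun i : ℕ => ⋀[ℝ]^i (Module.Dual ℝ V))).toLinearMap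

/-- The Mukai pairing `(s, t) = (α(s) ∧ t)_{2n}` on the complexified forms
`∧•V* ⊗ ℂ`. -/
noncomputable def mukaiC (V : Type*) [AddCommGroup V] [Module ℝ V]
    (s t : ℂ ⊗[ℝ] ExteriorAlgebra ℝ (Module.Dual ℝ V)) :
    ℂ ⊗[ℝ] ExteriorAlgebra ℝ (Module.Dual ℝ V) :=
  (extProj V (Module.finrank ℝ V)).baseChange ℂ ((alphaMap V).baseChange ℂ s * t)

/-- Complex conjugation on `∧•V* ⊗ ℂ`. -/
noncomputable def conjA (V : Type*) [AddCommGroup V] [Module ℝ V] :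
    (ℂ ⊗[ℝ] ExteriorAlgebra ℝ (Module.Dual ℝ V)) →ₐ[ℝ]
      (ℂ ⊗[ℝ] ExteriorAlgebra ℝ (Module.Dual ℝ V)) :=
  Algebra.TensorProduct.map Complex.conjAe.toAlgHom (AlgHom.id ℝ _)

/-- The exponential `exp(A) = Σ_j A^{∧j}/j!` of a complexified 2-form. -/
noncomputable def cexpWedge (V : Type*) [AddCommGroup V] [Module ℝ V] [FiniteDimensional ℝ V]
    (x : ℂ ⊗[ℝ] ExteriorAlgebra ℝ (Module.Dual ℝ V)) :
    ℂ ⊗[ℝ] ExteriorAlgebra ℝ (Module.Dual ℝ V) :=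
  ∑ j ∈ Finset.range (Module.finrank ℝ V + 1), ((Nat.factorial j : ℂ))⁻¹ • x ^ j

variable {V : Type} [AddCommGroup V] [Module ℝ V]

theorem alphaMap_of_mem {m : ℕ} {x : ExteriorAlgebra ℝ (Module.Dual ℝ V)}
    (hx : x ∈ ⋀[ℝ]^m (Module.Dual ℝ V)) :
    alphaMap V x = ((-1 : ℝ) ^ (m * (m - 1) / 2)) • x := by
  unfold alphaMap
  simp only [LinearMap.comp_apply, LinearEquiv.coe_toLinearMap,
    DirectSum.decomposeLinearEquiv_apply]
  rw [DirectSum.decompose_of_mem (fun i => ⋀[ℝ]^i (Module.Dual ℝ V)) hx, ← DirectSum.lof_eq_of ℝ, DirectSum.toModule_lof]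
  rfl

theorem extProj_of_mem {j m : ℕ} {x : ExteriorAlgebra ℝ (Module.Dual ℝ V)}
    (hx : x ∈ ⋀[ℝ]^m (Module.Dual ℝ V)) :
    extProj V j x = if j = m then x else 0 := by
  unfold extProj
  simp only [LinearMap.comp_apply, LinearEquiv.coe_toLinearMap,
    DirectSum.decomposeLinearEquiv_apply]
  rw [DirectSum.decompose_of_mem (fun i => ⋀[ℝ]^i (Module.Dual ℝ V)) hx, ← DirectSum.lof_eq_of ℝ]
  rw [← DirectSum.apply_eq_component, DirectSum.lof_eq_of]
  by_cases h : j = m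
  · subst h; rw [DirectSum.of_eq_same]; simp
  · rw [DirectSum.of_eq_of_ne _ _ _ h]
    simp [h]

theorem comm_of_two {x : ExteriorAlgebra ℝ (Module.Dual ℝ V)}
    (hx : x ∈ ⋀[ℝ]^2 (Module.Dual ℝ V)) (y : ExteriorAlgebra ℝ (Module.Dual ℝ V)) :
    x * y = y * x := by
  have key : ∀ (u v : Module.Dual ℝ V) (y : ExteriorAlgebra ℝ (Module.Dual ℝ V)),
      (ExteriorAlgebra.ι ℝ u * ExteriorAlgebra.ι ℝ v) * y
        = y * (ExteriorAlgebra.ι ℝ u * ExteriorAlgebra.ι ℝ v) := by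
    intro u v y
    induction y using CliffordAlgebra.induction with
    | algebraMap r => rw [Algebra.commutes]
    | ι w =>
      have h1 : ExteriorAlgebra.ι ℝ v * ExteriorAlgebra.ι ℝ w
          = -(ExteriorAlgebra.ι ℝ w * ExteriorAlgebra.ι ℝ v) :=
        eq_neg_of_add_eq_zero_left (ExteriorAlgebra.ι_add_mul_swap v w)
      have h2 : ExteriorAlgebra.ι ℝ u * ExteriorAlgebra.ι ℝ w
          = -(ExteriorAlgebra.ι ℝ w * ExteriorAlgebra.ι ℝ u) :=
        eq_neg_of_add_eq_zero_left (ExteriorAlgebra.ι_add_mul_swap u w)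
      rw [mul_assoc, h1, mul_neg, ← mul_assoc, h2, neg_mul, neg_neg, mul_assoc]
    | mul a b ha hb => rw [← mul_assoc, ha, mul_assoc, hb, ← mul_assoc]
    | add a b ha hb => rw [mul_add, add_mul, ha, hb]
  have h2 : x ∈ LinearMap.range (ExteriorAlgebra.ι ℝ (M := Module.Dual ℝ V))
      * LinearMap.range (ExteriorAlgebra.ι ℝ (M := Module.Dual ℝ V)) := by
    rw [← pow_two]; exact hx
  refine Submodule.mul_induction_on h2 ?_ ?_
  · rintro a ⟨u, rfl⟩ b ⟨v, rfl⟩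
    exact key u v y
  · intro a b ha hb; rw [add_mul, mul_add, ha, hb]

theorem central_tmul (z : ℂ) {x : ExteriorAlgebra ℝ (Module.Dual ℝ V)}
    (hx : x ∈ ⋀[ℝ]^2 (Module.Dual ℝ V)) (t : ℂ ⊗[ℝ] ExteriorAlgebra ℝ (Module.Dual ℝ V)) :
    (z ⊗ₜ[ℝ] x) * t = t * (z ⊗ₜ[ℝ] x) := by
  induction t with
  | zero => simp
  | tmul z' y =>
    rw [Algebra.TensorProduct.tmul_mul_tmul, Algebra.TensorProduct.tmul_mul_tmul,
      mul_comm z z', comm_of_two hx y]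
  | add a b ha hb => rw [mul_add, add_mul, ha, hb]

/-- degree-`m` part of the complexified exterior algebra -/
noncomputable def Gr (V : Type) [AddCommGroup V] [Module ℝ V] (m : ℕ) :
    Submodule ℂ (ℂ ⊗[ℝ] ExteriorAlgebra ℝ (Module.Dual ℝ V)) :=
  (⋀[ℝ]^m (Module.Dual ℝ V)).baseChange ℂ

theorem tmul_mem_Gr {m : ℕ} (z : ℂ) {x : ExteriorAlgebra ℝ (Module.Dual ℝ V)}
    (hx : x ∈ ⋀[ℝ]^m (Module.Dual ℝ V)) : z ⊗ₜ[ℝ] x ∈ Gr V m :=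
  Submodule.tmul_mem_baseChange_of_mem z hx

theorem Gr_mul {a b : ℕ} {s t : ℂ ⊗[ℝ] ExteriorAlgebra ℝ (Module.Dual ℝ V)}
    (hs : s ∈ Gr V a) (ht : t ∈ Gr V b) : s * t ∈ Gr V (a + b) := by
  rw [Gr, Submodule.baseChange_eq_span] at hs ht
  induction hs using Submodule.span_induction with
  | mem s hs =>
    obtain ⟨x, hx, rfl⟩ := hs
    induction ht using Submodule.span_induction with
    | mem t ht =>
      obtain ⟨y, hy, rfl⟩ := ht
      simp only [TensorProduct.mk_apply]
      rw [Algebra.TensorProduct.tmul_mul_tmul, one_mul]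
      exact tmul_mem_Gr _ (SetLike.mul_mem_graded hx hy)
    | zero => rw [mul_zero]; exact Submodule.zero_mem _
    | add t₁ t₂ h₁ h₂ p₁ p₂ => rw [mul_add]; exact Submodule.add_mem _ p₁ p₂
    | smul c t h p => rw [mul_smul_comm]; exact Submodule.smul_mem _ _ p
  | zero => rw [zero_mul]; exact Submodule.zero_mem _
  | add s₁ s₂ h₁ h₂ p₁ p₂ => rw [add_mul]; exact Submodule.add_mem _ p₁ p₂
  | smul c s h p => rw [smul_mul_assoc]; exact Submodule.smul_mem _ _ p

theorem alpha_bc_of_mem {m : ℕ} {t : ℂ ⊗[ℝ] ExteriorAlgebra ℝ (Module.Dual ℝ V)}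
    (ht : t ∈ Gr V m) :
    (alphaMap V).baseChange ℂ t = ((-1 : ℂ) ^ (m * (m - 1) / 2)) • t := by
  rw [Gr, Submodule.baseChange_eq_span] at ht
  induction ht using Submodule.span_induction with
  | mem t ht =>
    obtain ⟨x, hx, rfl⟩ := ht
    rw [TensorProduct.mk_apply, LinearMap.baseChange_tmul, alphaMap_of_mem hx,
      TensorProduct.tmul_smul, ← algebraMap_smul ℂ ((-1 : ℝ) ^ (m * (m - 1) / 2))]
    norm_num
  | zero => simp
  | add t₁ t₂ h₁ h₂ p₁ p₂ => rw [map_add, p₁, p₂, smul_add]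
  | smul c t h p => rw [map_smul, p, smul_comm]

theorem extProj_bc_of_mem {j m : ℕ} {t : ℂ ⊗[ℝ] ExteriorAlgebra ℝ (Module.Dual ℝ V)}
    (ht : t ∈ Gr V m) :
    (extProj V j).baseChange ℂ t = if j = m then t else 0 := by
  rw [Gr, Submodule.baseChange_eq_span] at ht
  induction ht using Submodule.span_induction with
  | mem t ht =>
    obtain ⟨x, hx, rfl⟩ := ht
    rw [TensorProduct.mk_apply, LinearMap.baseChange_tmul, extProj_of_mem hx]
    split
    · rfl
    · rw [TensorProduct.tmul_zero]
  | zero => simp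
  | add t₁ t₂ h₁ h₂ p₁ p₂ => rw [map_add, p₁, p₂]; split <;> simp
  | smul c t h p => rw [map_smul, p]; split <;> simp

theorem Gr_pow {a : ℕ} {s : ℂ ⊗[ℝ] ExteriorAlgebra ℝ (Module.Dual ℝ V)}
    (hs : s ∈ Gr V a) (j : ℕ) : s ^ j ∈ Gr V (a * j) := by
  induction j with
  | zero =>
    rw [pow_zero, Nat.mul_zero]
    exact tmul_mem_Gr 1 (SetLike.one_mem_graded (fun i : ℕ => ⋀[ℝ]^i (Module.Dual ℝ V)))
  | succ j ih =>
    rw [pow_succ, Nat.mul_succ]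
    exact Gr_mul ih hs

theorem Gr_list_prod (l : List (ℂ ⊗[ℝ] ExteriorAlgebra ℝ (Module.Dual ℝ V)))
    (h : ∀ x ∈ l, x ∈ Gr V 1) : l.prod ∈ Gr V l.length := by
  induction l with
  | nil =>
    rw [List.prod_nil, List.length_nil]
    exact tmul_mem_Gr 1 (SetLike.one_mem_graded (fun i : ℕ => ⋀[ℝ]^i (Module.Dual ℝ V)))
  | cons x l ih =>
    rw [List.prod_cons, List.length_cons]
    have := Gr_mul (h x (List.mem_cons_self)) (ih fun y hy => h y (List.mem_cons_of_mem _ hy))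
    rwa [Nat.add_comm] at this

theorem tri_step (p : ℕ) : (p + 2) * (p + 2 - 1) / 2 = p * (p - 1) / 2 + (2 * p + 1) := by
  cases p with
  | zero => rfl
  | succ q =>
    obtain ⟨t, ht⟩ := Nat.even_mul_succ_self q
    have e1 : q + 1 + 2 - 1 = q + 2 := by omega
    have e2 : q + 1 - 1 = q := by omega
    have h1 : (q + 1 + 2) * (q + 1 + 2 - 1) = q * (q + 1) + (4 * q + 6) := by rw [e1]; ring
    have h2 : (q + 1) * (q + 1 - 1) = q * (q + 1) := by rw [e2]; ring
    rw [h1, h2, ht]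
    omega

theorem sign_two_step (p : ℕ) :
    (-1 : ℂ) ^ ((p + 2) * (p + 2 - 1) / 2) = -(-1 : ℂ) ^ (p * (p - 1) / 2) := by
  rw [tri_step, pow_add, pow_succ, pow_mul]
  simp

theorem sign_deg (j k : ℕ) :
    (-1 : ℂ) ^ ((2 * j + k) * (2 * j + k - 1) / 2)
      = (-1 : ℂ) ^ j * (-1 : ℂ) ^ (k * (k - 1) / 2) := by
  induction j with
  | zero => simp
  | succ j ih =>
    have h : 2 * (j + 1) + k = (2 * j + k) + 2 := by ring
    rw [h, sign_two_step, ih, pow_succ]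
    ring

theorem central_pow {a : ℂ ⊗[ℝ] ExteriorAlgebra ℝ (Module.Dual ℝ V)}
    (ha : ∀ t, a * t = t * a) (l : ℕ) :
    ∀ t, a ^ l * t = t * a ^ l := by
  induction l with
  | zero => simp
  | succ l ih =>
    intro t
    rw [pow_succ, mul_assoc, ha t, ← mul_assoc, ih, mul_assoc]

theorem conjA_tmul (z : ℂ) (x : ExteriorAlgebra ℝ (Module.Dual ℝ V)) :
    conjA V (z ⊗ₜ[ℝ] x) = (starRingEnd ℂ) z ⊗ₜ[ℝ] x := by
  rfl

theorem conjA_smul (c : ℂ) (t : ℂ ⊗[ℝ] ExteriorAlgebra ℝ (Module.Dual ℝ V)) :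
    conjA V (c • t) = (starRingEnd ℂ) c • conjA V t := by
  induction t with
  | zero => simp
  | tmul z x =>
    rw [TensorProduct.smul_tmul', conjA_tmul, conjA_tmul, TensorProduct.smul_tmul',
      smul_eq_mul, smul_eq_mul, map_mul]
  | add a b ha hb => rw [smul_add, map_add, ha, hb, map_add, smul_add]

theorem double_sum_collapse {Mod : Type*} [AddCommMonoid Mod] (n k : ℕ) (hk : k ≤ n)
    (f : ℕ → ℕ → Mod) :
    (∑ j ∈ Finset.range (2 * n + 1), ∑ l ∈ Finset.range (2 * n + 1),
        if 2 * n = 2 * j + k + (2 * l + k) then f j l else 0)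
      = ∑ j ∈ Finset.range (n - k + 1), f j (n - k - j) := by
  have h1 : ∀ j ∈ Finset.range (2 * n + 1),
      (∑ l ∈ Finset.range (2 * n + 1), if 2 * n = 2 * j + k + (2 * l + k) then f j l else 0)
        = if j ≤ n - k then f j (n - k - j) else 0 := by
    intro j hj
    rcases le_or_gt j (n - k) with h | h
    · rw [Finset.sum_eq_single (n - k - j)]
      · rw [if_pos (by omega), if_pos h]
      · intro l hl hne; rw [if_neg (by omega)]
      · intro hcon; exact absurd (Finset.mem_range.mpr (by omega)) hcon
    · rw [if_neg (by omega), Finset.sum_eq_zero]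
      intro l hl
      rw [if_neg (by omega)]
  rw [Finset.sum_congr rfl h1, ← Finset.sum_filter]
  apply Finset.sum_congr _ (fun _ _ => rfl)
  ext j
  simp only [Finset.mem_filter, Finset.mem_range, Nat.lt_succ_iff]
  omega

theorem sum_pow_eq {R : Type*} [Ring R] [Algebra ℂ R] {x y : R} (h : Commute x y) (m : ℕ) :
    ∑ j ∈ Finset.range (m + 1),
        (((-1 : ℂ)) ^ j * ((j.factorial : ℂ))⁻¹ * (((m - j).factorial : ℂ))⁻¹)
          • (x ^ j * y ^ (m - j))
      = ((m.factorial : ℂ))⁻¹ • (y - x) ^ m := by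
  have hc : Commute (-x) y := h.neg_left
  rw [sub_eq_neg_add, hc.add_pow, Finset.smul_sum]
  refine Finset.sum_congr rfl fun j hj => ?_
  have hj' : j ≤ m := Nat.lt_succ_iff.mp (Finset.mem_range.mp hj)
  have hneg : (-x) ^ j = ((-1 : ℂ) ^ j) • x ^ j := by
    rw [← neg_one_smul ℂ x, smul_pow]
  have hcast : ((m.choose j : ℕ) : R) = algebraMap ℂ R ((m.choose j : ℂ)) := by
    rw [map_natCast]
  rw [hneg, smul_mul_assoc, smul_mul_assoc, hcast, ← Algebra.commutes, ← Algebra.smul_def,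
    smul_smul, smul_smul]
  congr 1
  rw [Nat.cast_choose ℂ hj']
  have f1 : (j.factorial : ℂ) ≠ 0 := Nat.cast_ne_zero.mpr j.factorial_ne_zero
  have f2 : ((m - j).factorial : ℂ) ≠ 0 := Nat.cast_ne_zero.mpr (m - j).factorial_ne_zero
  have f3 : (m.factorial : ℂ) ≠ 0 := Nat.cast_ne_zero.mpr m.factorial_ne_zero
  field_simp

set_option maxHeartbeats 4000000 in
theorem mukai_main {V : Type} [AddCommGroup V] [Module ℝ V] [FiniteDimensional ℝ V]
    (n k : ℕ) (hk : k ≤ n) (hV : Module.finrank ℝ V = 2 * n)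
    {B w : ExteriorAlgebra ℝ (Module.Dual ℝ V)}
    (hB : B ∈ ⋀[ℝ]^2 (Module.Dual ℝ V)) (hw : w ∈ ⋀[ℝ]^2 (Module.Dual ℝ V))
    {Ω Ωb : ℂ ⊗[ℝ] ExteriorAlgebra ℝ (Module.Dual ℝ V)}
    (hΩ : Ω ∈ Gr V k) (hΩb : Ωb ∈ Gr V k) (hconjΩ : conjA V Ω = Ωb) :
    mukaiC V (cexpWedge V ((1 : ℂ) ⊗ₜ[ℝ] B + Complex.I ⊗ₜ[ℝ] w) * Ω)
        (conjA V (cexpWedge V ((1 : ℂ) ⊗ₜ[ℝ] B + Complex.I ⊗ₜ[ℝ] w) * Ω))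
      = ((-1 : ℂ) ^ (k * (k - 1) / 2) * (-2 * Complex.I) ^ (n - k)
            * (((n - k).factorial : ℂ))⁻¹) •
          (((1 : ℂ) ⊗ₜ[ℝ] (w ^ (n - k))) * Ω * Ωb) := by
  set m := n - k with hm
  set A : ℂ ⊗[ℝ] ExteriorAlgebra ℝ (Module.Dual ℝ V) :=
    (1 : ℂ) ⊗ₜ[ℝ] B + Complex.I ⊗ₜ[ℝ] w with hA
  set Ab : ℂ ⊗[ℝ] ExteriorAlgebra ℝ (Module.Dual ℝ V) :=
    (1 : ℂ) ⊗ₜ[ℝ] B + (-Complex.I) ⊗ₜ[ℝ] w with hAb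
  have hconjA : conjA V A = Ab := by
    rw [hA, map_add, conjA_tmul, conjA_tmul, hAb]
    simp
  have hA2 : A ∈ Gr V 2 :=
    Submodule.add_mem _ (tmul_mem_Gr _ hB) (tmul_mem_Gr _ hw)
  have hAb2 : Ab ∈ Gr V 2 :=
    Submodule.add_mem _ (tmul_mem_Gr _ hB) (tmul_mem_Gr _ hw)
  have hcentAb : ∀ t, Ab * t = t * Ab := by
    intro t
    rw [hAb, add_mul, mul_add, central_tmul _ hB, central_tmul _ hw]
  have hcommAAb : Commute A Ab := (hcentAb A).symm
  -- expansion of φ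
  have hφ : cexpWedge V A * Ω
      = ∑ j ∈ Finset.range (2 * n + 1), ((j.factorial : ℂ))⁻¹ • (A ^ j * Ω) := by
    unfold cexpWedge
    rw [hV, Finset.sum_mul]
    exact Finset.sum_congr rfl fun j _ => smul_mul_assoc _ _ _
  have hconjφ : conjA V (cexpWedge V A * Ω)
      = ∑ l ∈ Finset.range (2 * n + 1), ((l.factorial : ℂ))⁻¹ • (Ab ^ l * Ωb) := by
    rw [hφ, map_sum]
    refine Finset.sum_congr rfl fun l _ => ?_
    rw [conjA_smul, map_mul, map_pow, hconjA, hconjΩ]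
    congr 1
    simp
  have hαφ : (alphaMap V).baseChange ℂ (cexpWedge V A * Ω)
      = ∑ j ∈ Finset.range (2 * n + 1),
          (((-1 : ℂ) ^ j * (-1 : ℂ) ^ (k * (k - 1) / 2)) * ((j.factorial : ℂ))⁻¹)
            • (A ^ j * Ω) := by
    rw [hφ, map_sum]
    refine Finset.sum_congr rfl fun j _ => ?_
    rw [map_smul, alpha_bc_of_mem (Gr_mul (Gr_pow hA2 j) hΩ), sign_deg, smul_smul]
    congr 1
    ring
  unfold mukaiC
  rw [hαφ, hconjφ, Finset.sum_mul_sum]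
  have hprod : ∀ j l : ℕ,
      ((((-1 : ℂ) ^ j * (-1 : ℂ) ^ (k * (k - 1) / 2)) * ((j.factorial : ℂ))⁻¹) • (A ^ j * Ω))
          * (((l.factorial : ℂ))⁻¹ • (Ab ^ l * Ωb))
        = ((((-1 : ℂ) ^ j * (-1 : ℂ) ^ (k * (k - 1) / 2)) * ((j.factorial : ℂ))⁻¹
              * ((l.factorial : ℂ))⁻¹)
            • ((A ^ j * Ω) * (Ab ^ l * Ωb))) := by
    intro j l
    rw [smul_mul_smul_comm]
  rw [Finset.sum_congr rfl fun j _ => Finset.sum_congr rfl fun l _ => hprod j l]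
  rw [map_sum]
  have hproj : ∀ j l : ℕ,
      (extProj V (Module.finrank ℝ V)).baseChange ℂ
          (((((-1 : ℂ) ^ j * (-1 : ℂ) ^ (k * (k - 1) / 2)) * ((j.factorial : ℂ))⁻¹
              * ((l.factorial : ℂ))⁻¹)
            • ((A ^ j * Ω) * (Ab ^ l * Ωb))))
        = (if 2 * n = 2 * j + k + (2 * l + k) then
            ((((-1 : ℂ) ^ j * (-1 : ℂ) ^ (k * (k - 1) / 2)) * ((j.factorial : ℂ))⁻¹
              * ((l.factorial : ℂ))⁻¹)
            • ((A ^ j * Ω) * (Ab ^ l * Ωb))) else 0) := by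
    intro j l
    rw [map_smul,
      extProj_bc_of_mem (Gr_mul (Gr_mul (Gr_pow hA2 j) hΩ) (Gr_mul (Gr_pow hAb2 l) hΩb)), hV]
    split
    · rfl
    · rw [smul_zero]
  rw [Finset.sum_congr rfl fun j _ => (map_sum _ _ _).trans
    (Finset.sum_congr rfl fun l _ => hproj j l)]
  rw [double_sum_collapse n k hk]
  have hX : ∀ j l : ℕ, (A ^ j * Ω) * (Ab ^ l * Ωb) = (A ^ j * Ab ^ l) * (Ω * Ωb) := by
    intro j l
    have hc := central_pow hcentAb l
    calc (A ^ j * Ω) * (Ab ^ l * Ωb) = A ^ j * (Ω * Ab ^ l * Ωb) := by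
          rw [mul_assoc, mul_assoc]
      _ = A ^ j * (Ab ^ l * Ω * Ωb) := by rw [← hc Ω]
      _ = (A ^ j * Ab ^ l) * (Ω * Ωb) := by rw [mul_assoc, mul_assoc]
  have hterm : ∀ j : ℕ,
      ((-1 : ℂ) ^ j * (-1 : ℂ) ^ (k * (k - 1) / 2) * ((j.factorial : ℂ))⁻¹
            * ((((m - j).factorial : ℂ))⁻¹))
          • ((A ^ j * Ω) * (Ab ^ (m - j) * Ωb))
        = (-1 : ℂ) ^ (k * (k - 1) / 2) •
            (((((-1 : ℂ)) ^ j * ((j.factorial : ℂ))⁻¹ * (((m - j).factorial : ℂ))⁻¹)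
                • (A ^ j * Ab ^ (m - j))) * (Ω * Ωb)) := by
    intro j
    rw [hX, smul_mul_assoc, smul_smul]
    congr 1
    ring
  rw [Finset.sum_congr rfl fun j _ => hterm j, ← Finset.smul_sum, ← Finset.sum_mul,
    sum_pow_eq hcommAAb m]
  have hsub : Ab - A = (-2 * Complex.I) • ((1 : ℂ) ⊗ₜ[ℝ] w) := by
    rw [hA, hAb, TensorProduct.smul_tmul']
    have h1 : (-2 * Complex.I) • (1 : ℂ) = (-Complex.I) - Complex.I := by
      rw [smul_eq_mul]; ring
    have h2 : ((-Complex.I) - Complex.I) ⊗ₜ[ℝ] w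
        = (-Complex.I) ⊗ₜ[ℝ] w - Complex.I ⊗ₜ[ℝ] w := TensorProduct.sub_tmul _ _ _
    rw [h1, h2]
    abel
  have hpow : (Ab - A) ^ m = ((-2 * Complex.I) ^ m) • ((1 : ℂ) ⊗ₜ[ℝ] (w ^ m)) := by
    rw [hsub, smul_pow, Algebra.TensorProduct.tmul_pow, one_pow]
  rw [hpow, smul_mul_assoc, smul_mul_assoc, smul_smul, smul_smul, ← mul_assoc]
  congr 1
  ring


/-- There is a nonzero constant `c` depending only on `n` and `k` such that for
every `2n`-dimensional `V`, real 2-forms `B, ω` and complex 1-forms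
`θ₁, …, θ_k` with `Ω = θ₁ ∧ ⋯ ∧ θ_k`, the Mukai pairing of
`φ = exp(B+iω) ∧ Ω` with its conjugate equals `c · ω^{n−k} ∧ Ω ∧ conj(Ω)`;
in particular the pairing is nonzero iff `ω^{n−k} ∧ Ω ∧ conj(Ω) ≠ 0`. -/
theorem mukai_pairing_exp_formula (n k : ℕ) (hk : k ≤ n) :
    ∃ c : ℂ, c ≠ 0 ∧
      ∀ (V : Type) (_ : AddCommGroup V) (_ : Module ℝ V) (_ : FiniteDimensional ℝ V),
        Module.finrank ℝ V = 2 * n →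
        ∀ (B w : ExteriorAlgebra ℝ (Module.Dual ℝ V)),
          B ∈ ⋀[ℝ]^2 (Module.Dual ℝ V) → w ∈ ⋀[ℝ]^2 (Module.Dual ℝ V) →
        ∀ (ξ η : Fin k → Module.Dual ℝ V),
          letI Ω : ℂ ⊗[ℝ] ExteriorAlgebra ℝ (Module.Dual ℝ V) :=
            (List.ofFn fun i =>
              (1 : ℂ) ⊗ₜ[ℝ] ExteriorAlgebra.ι ℝ (ξ i) +
                Complex.I ⊗ₜ[ℝ] ExteriorAlgebra.ι ℝ (η i)).prod
          letI φ : ℂ ⊗[ℝ] ExteriorAlgebra ℝ (Module.Dual ℝ V) :=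
            cexpWedge V ((1 : ℂ) ⊗ₜ[ℝ] B + Complex.I ⊗ₜ[ℝ] w) * Ω
          letI rhs : ℂ ⊗[ℝ] ExteriorAlgebra ℝ (Module.Dual ℝ V) :=
            ((1 : ℂ) ⊗ₜ[ℝ] (w ^ (n - k))) * Ω * conjA V Ω
          mukaiC V φ (conjA V φ) = c • rhs ∧
            (mukaiC V φ (conjA V φ) ≠ 0 ↔ rhs ≠ 0) := by
  classical
  refine ⟨(-1 : ℂ) ^ (k * (k - 1) / 2) * (-2 * Complex.I) ^ (n - k)
      * (((n - k).factorial : ℂ))⁻¹, ?_, ?_⟩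
  · refine mul_ne_zero (mul_ne_zero (pow_ne_zero _ (by norm_num)) (pow_ne_zero _ ?_))
      (inv_ne_zero (Nat.cast_ne_zero.mpr (n - k).factorial_ne_zero))
    simp [Complex.I_ne_zero]
  intro V _ _ _ hV B w hB hw ξ η
  have hι : ∀ v : Module.Dual ℝ V, ExteriorAlgebra.ι ℝ v ∈ ⋀[ℝ]^1 (Module.Dual ℝ V) := by
    intro v
    simpa using LinearMap.mem_range_self _ v
  have hfac : ∀ x ∈ (List.ofFn fun i : Fin k =>
      (1 : ℂ) ⊗ₜ[ℝ] ExteriorAlgebra.ι ℝ (ξ i) +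
        Complex.I ⊗ₜ[ℝ] ExteriorAlgebra.ι ℝ (η i)), x ∈ Gr V 1 := by
    intro x hx
    rw [List.mem_ofFn] at hx
    obtain ⟨i, rfl⟩ := hx
    exact Submodule.add_mem _ (tmul_mem_Gr _ (hι _)) (tmul_mem_Gr _ (hι _))
  have hΩ : (List.ofFn fun i : Fin k =>
      (1 : ℂ) ⊗ₜ[ℝ] ExteriorAlgebra.ι ℝ (ξ i) +
        Complex.I ⊗ₜ[ℝ] ExteriorAlgebra.ι ℝ (η i)).prod ∈ Gr V k := by
    have := Gr_list_prod _ hfac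
    rwa [List.length_ofFn] at this
  have hconjΩ : conjA V (List.ofFn fun i : Fin k =>
        (1 : ℂ) ⊗ₜ[ℝ] ExteriorAlgebra.ι ℝ (ξ i) +
          Complex.I ⊗ₜ[ℝ] ExteriorAlgebra.ι ℝ (η i)).prod
      = (List.ofFn fun i : Fin k =>
        (1 : ℂ) ⊗ₜ[ℝ] ExteriorAlgebra.ι ℝ (ξ i) +
          (-Complex.I) ⊗ₜ[ℝ] ExteriorAlgebra.ι ℝ (η i)).prod := by
    rw [map_list_prod, List.map_ofFn]
    refine congrArg List.prod (congrArg List.ofFn (funext fun i => ?_))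
    rw [Function.comp_apply, map_add, conjA_tmul, conjA_tmul]
    simp
  have hfacb : ∀ x ∈ (List.ofFn fun i : Fin k =>
      (1 : ℂ) ⊗ₜ[ℝ] ExteriorAlgebra.ι ℝ (ξ i) +
        (-Complex.I) ⊗ₜ[ℝ] ExteriorAlgebra.ι ℝ (η i)), x ∈ Gr V 1 := by
    intro x hx
    rw [List.mem_ofFn] at hx
    obtain ⟨i, rfl⟩ := hx
    exact Submodule.add_mem _ (tmul_mem_Gr _ (hι _)) (tmul_mem_Gr _ (hι _))
  have hΩb : conjA V (List.ofFn fun i : Fin k =>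
      (1 : ℂ) ⊗ₜ[ℝ] ExteriorAlgebra.ι ℝ (ξ i) +
        Complex.I ⊗ₜ[ℝ] ExteriorAlgebra.ι ℝ (η i)).prod ∈ Gr V k := by
    rw [hconjΩ]
    have := Gr_list_prod _ hfacb
    rwa [List.length_ofFn] at this
  have heq := mukai_main n k hk hV hB hw hΩ hΩb rfl
  refine ⟨heq, ?_⟩
  rw [heq, ne_eq, smul_eq_zero]
  simp only [not_or]
  constructor
  · rintro ⟨-, h⟩; exact h
  · intro h
    refine ⟨?_, h⟩
    refine mul_ne_zero (mul_ne_zero (pow_ne_zero _ (by norm_num)) (pow_ne_zero _ ?_))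
      (inv_ne_zero (Nat.cast_ne_zero.mpr (n - k).factorial_ne_zero))
    simp [Complex.I_ne_zero]
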